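/- arXiv:1104.4525 — 7 statements merged into one kernel-verified Lean document; each statement's English description precedes it below -/
import Mathlib

section
/- Suppose ω is an analytic function on an open set with X1·∂₁ω + X2·∂₂ω = 0. Then for every j ≥ 1 there exist positive integers c_{i,j} (0 ≤ i ≤ j−1) with c_{0,j} = j, depending only on i and j, such that 𝒳(∂₂^{j}ω) = Σ_{i=0}^{j−1} c_{i,j}·b_i·∂₂^{j−i}ω, where b_i = −X1·∂₂^{i+1}(X2/X1). -/
noncomputable def d1 (f : ℝ → ℝ → ℝ) : ℝ → ℝ → ℝ := fun x y => deriv (fun t => f t y) x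
noncomputable def d2 (f : ℝ → ℝ → ℝ) : ℝ → ℝ → ℝ := fun x y => deriv (fun t => f x t) y

noncomputable def Xop (X1 X2 f : ℝ → ℝ → ℝ) : ℝ → ℝ → ℝ :=
  fun x y => X1 x y * d1 f x y + X2 x y * d2 f x y

/-- b_i = −X1·∂₂^{i+1}(X2/X1). -/
noncomputable def bco (X1 X2 : ℝ → ℝ → ℝ) (i : ℕ) : ℝ → ℝ → ℝ :=
  fun x y => - X1 x y * (d2^[i+1] (fun s t => X2 s t / X1 s t)) x y

open Filter Topology

namespace XopAux

/-- infinity smoothness exponent -/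
abbrev oo : WithTop ℕ∞ := ((⊤ : ℕ∞) : WithTop ℕ∞)

/-- Uncurry. -/
noncomputable def uc (f : ℝ → ℝ → ℝ) : ℝ × ℝ → ℝ := fun p => f p.1 p.2

/-- Directional derivative operator. -/
noncomputable def Dv (v : ℝ × ℝ) (F : ℝ × ℝ → ℝ) : ℝ × ℝ → ℝ := fun p => fderiv ℝ F p v

lemma d2_eq_fderiv {f : ℝ → ℝ → ℝ} {p : ℝ × ℝ} (hf : DifferentiableAt ℝ (uc f) p) :
    d2 f p.1 p.2 = fderiv ℝ (uc f) p (0, 1) := by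
  have h1 : HasDerivAt (fun t : ℝ => ((p.1, t) : ℝ × ℝ)) ((0 : ℝ), (1 : ℝ)) p.2 :=
    (hasDerivAt_const p.2 p.1).prodMk (hasDerivAt_id p.2)
  have h2 : HasDerivAt (fun t : ℝ => uc f (p.1, t)) (fderiv ℝ (uc f) p (0, 1)) p.2 :=
    (by have := (hf.hasFDerivAt : HasFDerivAt (uc f) (fderiv ℝ (uc f) p) (p.1, p.2)).comp_hasDerivAt p.2 h1; exact this)
  exact h2.deriv

lemma d1_eq_fderiv {f : ℝ → ℝ → ℝ} {p : ℝ × ℝ} (hf : DifferentiableAt ℝ (uc f) p) :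
    d1 f p.1 p.2 = fderiv ℝ (uc f) p (1, 0) := by
  have h1 : HasDerivAt (fun t : ℝ => ((t, p.2) : ℝ × ℝ)) ((1 : ℝ), (0 : ℝ)) p.1 :=
    (hasDerivAt_id p.1).prodMk (hasDerivAt_const p.1 p.2)
  have h2 : HasDerivAt (fun t : ℝ => uc f (t, p.2)) (fderiv ℝ (uc f) p (1, 0)) p.1 :=
    (by have := (hf.hasFDerivAt : HasFDerivAt (uc f) (fderiv ℝ (uc f) p) (p.1, p.2)).comp_hasDerivAt p.1 h1; exact this)
  exact h2.deriv

lemma one_le_inf : (1 : WithTop ℕ∞) ≤ oo := by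
  show (1 : WithTop ℕ∞) ≤ ((⊤ : ℕ∞) : WithTop ℕ∞)
  exact_mod_cast ((mod_cast le_top) : (1 : ℕ∞) ≤ ⊤)

lemma two_le_inf : (2 : WithTop ℕ∞) ≤ oo := by
  show (2 : WithTop ℕ∞) ≤ ((⊤ : ℕ∞) : WithTop ℕ∞)
  norm_cast

lemma Dv_contDiffOn {v : ℝ × ℝ} {F : ℝ × ℝ → ℝ} {V : Set (ℝ × ℝ)} (hV : IsOpen V)
    (hF : ContDiffOn ℝ oo F V) : ContDiffOn ℝ oo (Dv v F) V := by
  have h1 : ContDiffOn ℝ oo (fderiv ℝ F) V :=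
    hF.fderiv_of_isOpen hV (le_of_eq rfl)
  exact h1.clm_apply contDiffOn_const

lemma Dv_iter_contDiffOn {v : ℝ × ℝ} {F : ℝ × ℝ → ℝ} {V : Set (ℝ × ℝ)} (hV : IsOpen V)
    (hF : ContDiffOn ℝ oo F V) (k : ℕ) : ContDiffOn ℝ oo ((Dv v)^[k] F) V := by
  induction k with
  | zero => exact hF
  | succ k ih =>
    rw [Function.iterate_succ']
    exact Dv_contDiffOn hV ih

lemma eventuallyEq_of_eqOn {g G : ℝ × ℝ → ℝ} {V : Set (ℝ × ℝ)} {p : ℝ × ℝ}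
    (hV : IsOpen V) (hp : p ∈ V) (heq : ∀ q ∈ V, g q = G q) : g =ᶠ[𝓝 p] G :=
  Filter.eventually_of_mem (hV.mem_nhds hp) heq

/-- Representation of iterated `d2` by directional fderivs. -/
lemma d2_iter_eq {f : ℝ → ℝ → ℝ} {G : ℝ × ℝ → ℝ} {V : Set (ℝ × ℝ)} (hV : IsOpen V)
    (hG : ContDiffOn ℝ oo G V) (heq : ∀ q ∈ V, uc f q = G q) (k : ℕ) :
    ∀ p ∈ V, uc (d2^[k] f) p = (Dv (0, 1))^[k] G p := by
  induction k with
  | zero => exact heq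
  | succ k ih =>
    intro p hp
    have hGk : ContDiffOn ℝ oo ((Dv (0, 1))^[k] G) V := Dv_iter_contDiffOn hV hG k
    have hev : uc (d2^[k] f) =ᶠ[𝓝 p] (Dv (0, 1))^[k] G :=
      eventuallyEq_of_eqOn hV hp ih
    have hdG : DifferentiableAt ℝ ((Dv (0, 1))^[k] G) p :=
      (hGk.contDiffAt (hV.mem_nhds hp)).differentiableAt (by simp [oo])
    have hdiff : DifferentiableAt ℝ (uc (d2^[k] f)) p := hdG.congr_of_eventuallyEq hev
    have h0 : uc (d2^[k+1] f) p = d2 (d2^[k] f) p.1 p.2 := by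
      rw [Function.iterate_succ']; rfl
    rw [h0, d2_eq_fderiv hdiff, hev.fderiv_eq, Function.iterate_succ']
    rfl

/-- Clairaut for smooth functions on an open set. -/
lemma swapDv {F : ℝ × ℝ → ℝ} {V : Set (ℝ × ℝ)} (hV : IsOpen V)
    (hF : ContDiffOn ℝ oo F V) {p : ℝ × ℝ} (hp : p ∈ V) :
    Dv (1, 0) (Dv (0, 1) F) p = Dv (0, 1) (Dv (1, 0) F) p := by
  have hFp : ContDiffAt ℝ oo F p := hF.contDiffAt (hV.mem_nhds hp)
  have hsym : ∀ v w : ℝ × ℝ, fderiv ℝ (fderiv ℝ F) p v w = fderiv ℝ (fderiv ℝ F) p w v :=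
    hFp.isSymmSndFDerivAt (by simpa using two_le_inf)
  have hdf : DifferentiableAt ℝ (fderiv ℝ F) p :=
    ((hF.fderiv_of_isOpen (m := oo) hV (le_of_eq rfl)).contDiffAt (hV.mem_nhds hp)).differentiableAt
      (by simp [oo])
  have key : ∀ v w : ℝ × ℝ, fderiv ℝ (fun q => fderiv ℝ F q v) p w
      = fderiv ℝ (fderiv ℝ F) p w v := by
    intro v w
    have h2 : fderiv ℝ (fun q => fderiv ℝ F q v) p
        = (fderiv ℝ F p).comp (fderiv ℝ (fun _ : ℝ × ℝ => v) p)
          + (fderiv ℝ (fderiv ℝ F) p).flip v :=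
      fderiv_clm_apply (c := fderiv ℝ F) (u := fun _ => v) hdf (differentiableAt_const v)
    rw [h2]
    simp
  show fderiv ℝ (fun q => fderiv ℝ F q (0, 1)) p (1, 0)
      = fderiv ℝ (fun q => fderiv ℝ F q (1, 0)) p (0, 1)
  rw [key, key, hsym]

/-- Commutation of directional derivatives on an open set. -/
lemma commDv {G : ℝ × ℝ → ℝ} {V : Set (ℝ × ℝ)} (hV : IsOpen V)
    (hG : ContDiffOn ℝ oo G V) (k : ℕ) :
    ∀ p ∈ V, Dv (1, 0) ((Dv (0, 1))^[k] G) p = (Dv (0, 1))^[k] (Dv (1, 0) G) p := by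
  induction k with
  | zero => intro p _; rfl
  | succ k ih =>
    intro p hp
    have hGk : ContDiffOn ℝ oo ((Dv (0, 1))^[k] G) V := Dv_iter_contDiffOn hV hG k
    have h1 : Dv (1, 0) ((Dv (0, 1))^[k+1] G) p
        = Dv (1, 0) (Dv (0, 1) ((Dv (0, 1))^[k] G)) p := by
      rw [Function.iterate_succ']; rfl
    have h2 := swapDv hV hGk hp
    have hev : Dv (1, 0) ((Dv (0, 1))^[k] G) =ᶠ[𝓝 p] (Dv (0, 1))^[k] (Dv (1, 0) G) :=
      eventuallyEq_of_eqOn hV hp ih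
    have h3 : Dv (0, 1) (Dv (1, 0) ((Dv (0, 1))^[k] G)) p
        = Dv (0, 1) ((Dv (0, 1))^[k] (Dv (1, 0) G)) p := by
      show fderiv ℝ (Dv (1, 0) ((Dv (0, 1))^[k] G)) p (0, 1)
          = fderiv ℝ ((Dv (0, 1))^[k] (Dv (1, 0) G)) p (0, 1)
      rw [hev.fderiv_eq]
    have h4 : Dv (0, 1) ((Dv (0, 1))^[k] (Dv (1, 0) G)) p
        = (Dv (0, 1))^[k+1] (Dv (1, 0) G) p := by
      rw [Function.iterate_succ']; rfl
    rw [h1, h2, h3, h4]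

/-- ∂₁ commutes with iterated ∂₂ for functions smooth on an open set. -/
lemma d1_d2_iter_comm {f : ℝ → ℝ → ℝ} {V : Set (ℝ × ℝ)} (hV : IsOpen V)
    (hF : ContDiffOn ℝ oo (uc f) V) (k : ℕ) :
    ∀ p ∈ V, d1 (d2^[k] f) p.1 p.2 = d2^[k] (d1 f) p.1 p.2 := by
  intro p hp
  have hGk : ContDiffOn ℝ oo ((Dv (0, 1))^[k] (uc f)) V := Dv_iter_contDiffOn hV hF k
  have hrep := d2_iter_eq hV hF (fun q _ => rfl) k
  have hev : uc (d2^[k] f) =ᶠ[𝓝 p] (Dv (0, 1))^[k] (uc f) := eventuallyEq_of_eqOn hV hp hrep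
  have hdG : DifferentiableAt ℝ ((Dv (0, 1))^[k] (uc f)) p :=
    (hGk.contDiffAt (hV.mem_nhds hp)).differentiableAt (by simp [oo])
  have hdiff : DifferentiableAt ℝ (uc (d2^[k] f)) p := hdG.congr_of_eventuallyEq hev
  have h1 : d1 (d2^[k] f) p.1 p.2 = Dv (1, 0) ((Dv (0, 1))^[k] (uc f)) p := by
    rw [d1_eq_fderiv hdiff, hev.fderiv_eq]; rfl
  have h2 : ∀ q ∈ V, uc (d1 f) q = Dv (1, 0) (uc f) q := by
    intro q hq
    exact d1_eq_fderiv ((hF.contDiffAt (hV.mem_nhds hq)).differentiableAt (by simp [oo]))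
  have h3 := d2_iter_eq hV (Dv_contDiffOn hV hF) h2 k p hp
  rw [h1, commDv hV hF k p hp]
  exact h3.symm

/-- Slice: iterated d2 is iterated one-variable derivative. -/
lemma d2_iter_slice (f : ℝ → ℝ → ℝ) (k : ℕ) (x : ℝ) : d2^[k] f x = deriv^[k] (f x) := by
  induction k with
  | zero => rfl
  | succ k ih =>
    rw [Function.iterate_succ', Function.iterate_succ']
    funext y
    show deriv (fun t => d2^[k] f x t) y = deriv (deriv^[k] (f x)) y
    rw [show (fun t => d2^[k] f x t) = deriv^[k] (f x) from ih]

lemma iter_deriv_congr {u v : ℝ → ℝ} {S : Set ℝ} (hS : IsOpen S)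
    (h : ∀ t ∈ S, u t = v t) (k : ℕ) : ∀ t ∈ S, deriv^[k] u t = deriv^[k] v t := by
  induction k with
  | zero => exact h
  | succ k ih =>
    intro t ht
    rw [Function.iterate_succ_apply', Function.iterate_succ_apply']
    exact Filter.EventuallyEq.deriv_eq (Filter.eventually_of_mem (hS.mem_nhds ht) ih)

lemma iter_deriv_neg (u : ℝ → ℝ) (k : ℕ) :
    deriv^[k] (fun t => -u t) = fun t => -deriv^[k] u t := by
  induction k with
  | zero => rfl
  | succ k ih =>
    funext t
    rw [Function.iterate_succ_apply', Function.iterate_succ_apply', ih]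
    exact deriv.neg

lemma iter_deriv_contDiffOn {u : ℝ → ℝ} {S : Set ℝ} (hS : IsOpen S)
    (hu : ContDiffOn ℝ oo u S) (k : ℕ) : ContDiffOn ℝ oo (deriv^[k] u) S := by
  induction k with
  | zero => exact hu
  | succ k ih =>
    rw [Function.iterate_succ']
    exact ih.deriv_of_isOpen hS (le_of_eq rfl)

/-- Leibniz rule for iterated derivatives on an open set. -/
lemma iter_deriv_mul {u v : ℝ → ℝ} {S : Set ℝ} (hS : IsOpen S)
    (hu : ContDiffOn ℝ oo u S) (hv : ContDiffOn ℝ oo v S) (n : ℕ) :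
    ∀ y ∈ S, deriv^[n] (fun t => u t * v t) y
      = ∑ k ∈ Finset.range (n + 1),
          (n.choose k : ℝ) * deriv^[k] u y * deriv^[n - k] v y := by
  induction n with
  | zero => intro y _; simp
  | succ n ih =>
    intro y hy
    have hdiffu : ∀ k, ∀ t ∈ S, DifferentiableAt ℝ (deriv^[k] u) t := fun k t ht =>
      ((iter_deriv_contDiffOn hS hu k).contDiffAt (hS.mem_nhds ht)).differentiableAt (by simp [oo])
    have hdiffv : ∀ k, ∀ t ∈ S, DifferentiableAt ℝ (deriv^[k] v) t := fun k t ht =>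
      ((iter_deriv_contDiffOn hS hv k).contDiffAt (hS.mem_nhds ht)).differentiableAt (by simp [oo])
    have step1 : deriv^[n+1] (fun t => u t * v t) y
        = deriv (fun t => ∑ k ∈ Finset.range (n + 1),
            (n.choose k : ℝ) * deriv^[k] u t * deriv^[n - k] v t) y := by
      rw [Function.iterate_succ']
      exact Filter.EventuallyEq.deriv_eq (Filter.eventually_of_mem (hS.mem_nhds hy) ih)
    have step2 : deriv (fun t => ∑ k ∈ Finset.range (n + 1),
            (n.choose k : ℝ) * deriv^[k] u t * deriv^[n - k] v t) y
        = ∑ k ∈ Finset.range (n + 1), (n.choose k : ℝ) *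
            (deriv^[k+1] u y * deriv^[n - k] v y + deriv^[k] u y * deriv^[n - k + 1] v y) := by
      rw [deriv_fun_sum]
      · refine Finset.sum_congr rfl (fun k _ => ?_)
        have h1 : deriv (fun t => (n.choose k : ℝ) * deriv^[k] u t * deriv^[n - k] v t) y
            = (n.choose k : ℝ) * deriv (fun t => deriv^[k] u t * deriv^[n - k] v t) y := by
          rw [show (fun t => (n.choose k : ℝ) * deriv^[k] u t * deriv^[n - k] v t)
              = fun t => (n.choose k : ℝ) * (deriv^[k] u t * deriv^[n - k] v t) by
            funext t; ring]
          exact deriv_const_mul _ ((hdiffu k y hy).mul (hdiffv (n - k) y hy))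
        rw [h1, deriv_fun_mul (hdiffu k y hy) (hdiffv (n - k) y hy)]
        have e1 : deriv (deriv^[k] u) y = deriv^[k+1] u y := by
          rw [Function.iterate_succ']; try rfl
        have e2 : deriv (deriv^[n-k] v) y = deriv^[n-k+1] v y := by
          rw [Function.iterate_succ']; try rfl
        rw [e1, e2]; try ring
      · intro k _
        exact (((hdiffu k y hy).const_mul _).mul (hdiffv (n - k) y hy))
    rw [step1, step2]
    have expand : ∑ k ∈ Finset.range (n + 1), (n.choose k : ℝ) *
            (deriv^[k+1] u y * deriv^[n - k] v y + deriv^[k] u y * deriv^[n - k + 1] v y)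
        = (∑ k ∈ Finset.range (n + 1), (n.choose k : ℝ) *
            deriv^[k+1] u y * deriv^[n - k] v y)
          + ∑ k ∈ Finset.range (n + 1), (n.choose k : ℝ) *
            deriv^[k] u y * deriv^[n + 1 - k] v y := by
      rw [← Finset.sum_add_distrib]
      refine Finset.sum_congr rfl (fun k hk => ?_)
      have hnk : n - k + 1 = n + 1 - k := by
        have := Finset.mem_range.mp hk; omega
      rw [← hnk]; ring
    rw [expand]
    rw [Finset.sum_range_succ' (fun k => (((n+1).choose k : ℝ)) * deriv^[k] u y
      * deriv^[n + 1 - k] v y) (n + 1)]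
    have lhs2 : ∑ k ∈ Finset.range (n + 1), (n.choose k : ℝ) * deriv^[k] u y
        * deriv^[n + 1 - k] v y
        = (∑ k ∈ Finset.range n, (n.choose (k+1) : ℝ) * deriv^[k+1] u y
            * deriv^[n - k] v y) + (n.choose 0 : ℝ) * deriv^[0] u y * deriv^[n + 1] v y := by
      rw [Finset.sum_range_succ' (fun k => ((n.choose k : ℝ)) * deriv^[k] u y
        * deriv^[n + 1 - k] v y) n]
      congr 1
      refine Finset.sum_congr rfl (fun k hk => ?_)
      have hnk : n + 1 - (k + 1) = n - k := by omega
      rw [hnk]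
    rw [lhs2]
    have sum_ext : ∑ k ∈ Finset.range n, (n.choose (k+1) : ℝ) * deriv^[k+1] u y
        * deriv^[n - k] v y
        = ∑ k ∈ Finset.range (n + 1), (n.choose (k+1) : ℝ) * deriv^[k+1] u y
          * deriv^[n - k] v y := by
      rw [Finset.sum_range_succ]
      simp [Nat.choose_succ_self]
    rw [sum_ext, ← add_assoc, ← Finset.sum_add_distrib]
    have final : ∑ k ∈ Finset.range (n + 1),
          ((n.choose k : ℝ) * deriv^[k+1] u y * deriv^[n - k] v y
            + (n.choose (k+1) : ℝ) * deriv^[k+1] u y * deriv^[n - k] v y)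
        = ∑ k ∈ Finset.range (n + 1), ((n+1).choose (k+1) : ℝ) * deriv^[k+1] u y
          * deriv^[n + 1 - (k+1)] v y := by
      refine Finset.sum_congr rfl (fun k hk => ?_)
      have hc : ((n+1).choose (k+1) : ℝ) = (n.choose k : ℝ) + (n.choose (k+1) : ℝ) := by
        rw [Nat.choose_succ_succ]; push_cast; ring
      have hnk : n + 1 - (k + 1) = n - k := by omega
      rw [hnk, hc]; ring
    rw [final]
    simp

end XopAux

open XopAux in
/-- If 𝒳ω = 0 on an open set avoiding zeros of X1, then for every j ≥ 1 there are
positive integers c_{i,j} (depending only on i,j) with c_{0,j} = j such that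
𝒳(∂₂^j ω) = Σ_{i=0}^{j−1} c_{i,j}·b_i·∂₂^{j−i}ω on that set. -/
theorem Xop_iterate_d2 (X1 X2 : ℝ → ℝ → ℝ)
    (hX1 : ContDiff ℝ (⊤ : ℕ∞) (fun p : ℝ × ℝ => X1 p.1 p.2))
    (hX2 : ContDiff ℝ (⊤ : ℕ∞) (fun p : ℝ × ℝ => X2 p.1 p.2))
    (U : Set (ℝ × ℝ)) (hU : IsOpen U)
    (hX1ne : ∀ p ∈ U, X1 p.1 p.2 ≠ 0)
    (ω : ℝ → ℝ → ℝ)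
    (hω : AnalyticOnNhd ℝ (fun p : ℝ × ℝ => ω p.1 p.2) U)
    (hfirst : ∀ p ∈ U, Xop X1 X2 ω p.1 p.2 = 0) :
    ∃ c : ℕ → ℕ → ℕ, ∀ j : ℕ, 1 ≤ j →
      c 0 j = j ∧ (∀ i < j, 0 < c i j) ∧
      ∀ p ∈ U, Xop X1 X2 (d2^[j] ω) p.1 p.2
        = ∑ i ∈ Finset.range j, (c i j : ℝ) * bco X1 X2 i p.1 p.2 * (d2^[j - i] ω) p.1 p.2 := by
  classical
  have hF : ContDiffOn ℝ oo (uc ω) U := hω.contDiffOn_of_completeSpace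
  set Y : ℝ → ℝ → ℝ := fun s t => X2 s t / X1 s t with hYdef
  have hGY : ContDiffOn ℝ oo (uc Y) U :=
    ((hX2.of_le (mod_cast le_top)).contDiffOn).div ((hX1.of_le (mod_cast le_top)).contDiffOn) hX1ne
  refine ⟨fun i j => j.choose (i + 1), fun j hj => ⟨Nat.choose_one_right j,
    fun i hi => Nat.choose_pos (by omega), ?_⟩⟩
  rintro ⟨x, y⟩ hp
  have hX1p : X1 x y ≠ 0 := hX1ne (x, y) hp
  set S : Set ℝ := {t : ℝ | (x, t) ∈ U} with hSdef
  have hS : IsOpen S := hU.preimage (by fun_prop : Continuous fun t : ℝ => ((x, t) : ℝ × ℝ))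
  have hyS : y ∈ S := hp
  have slice_smooth : ∀ G : ℝ × ℝ → ℝ, ContDiffOn ℝ oo G U →
      ContDiffOn ℝ oo (fun t => G (x, t)) S := by
    intro G hG
    exact hG.comp ((contDiff_prodMk_right x).contDiffOn) (fun t ht => ht)
  -- d1 ω = -(Y * d2 ω) on U
  have hd1ω : ∀ q ∈ U, d1 ω q.1 q.2 = -(Y q.1 q.2 * d2 ω q.1 q.2) := by
    intro q hq
    have h0 := hfirst q hq
    have hx1 := hX1ne q hq
    unfold Xop at h0
    rw [hYdef]
    field_simp
    linear_combination h0
  -- Step 1: commute d1 with d2^[j]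
  have step1 : d1 (d2^[j] ω) x y = d2^[j] (d1 ω) x y :=
    d1_d2_iter_comm hU hF j (x, y) hp
  -- Step 2: congruence to -(Y * d2 ω), via slices
  have hseq : ∀ t ∈ S, d1 ω x t = -(Y x t * d2 ω x t) := fun t ht => hd1ω (x, t) ht
  have key2 : deriv^[j] (d1 ω x) y = deriv^[j] (fun t => -(Y x t * d2 ω x t)) y :=
    iter_deriv_congr hS hseq j y hyS
  have hneg : deriv^[j] (fun t => -(Y x t * d2 ω x t)) y
      = -deriv^[j] (fun t => Y x t * d2 ω x t) y :=
    congrFun (iter_deriv_neg (fun t => Y x t * d2 ω x t) j) y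
  have step2 : d2^[j] (d1 ω) x y = -deriv^[j] (fun t => Y x t * d2 ω x t) y := by
    rw [d2_iter_slice, key2, hneg]
  -- smoothness of slices
  have hu : ContDiffOn ℝ oo (fun t => Y x t) S := slice_smooth (uc Y) hGY
  have hωx : ContDiffOn ℝ oo (fun t => ω x t) S := slice_smooth (uc ω) hF
  have hv : ContDiffOn ℝ oo (fun t => d2 ω x t) S := by
    have h : (fun t => d2 ω x t) = deriv (fun t => ω x t) := rfl
    rw [h]
    exact hωx.deriv_of_isOpen hS (le_of_eq rfl)
  -- Step 3: Leibniz
  have step3 : deriv^[j] (fun t => Y x t * d2 ω x t) y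
      = ∑ k ∈ Finset.range (j + 1), (j.choose k : ℝ) * deriv^[k] (fun t => Y x t) y
          * deriv^[j - k] (fun t => d2 ω x t) y :=
    iter_deriv_mul hS hu hv j y hyS
  have slice_u : ∀ k, deriv^[k] (fun t => Y x t) y = d2^[k] Y x y := by
    intro k; rw [d2_iter_slice]
  have slice_v : ∀ k, deriv^[k] (fun t => d2 ω x t) y = d2^[k+1] ω x y := by
    intro k
    rw [d2_iter_slice, Function.iterate_succ_apply]
    rfl
  have hd2top : d2 (d2^[j] ω) x y = d2^[j+1] ω x y := by
    rw [Function.iterate_succ_apply']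
  show X1 x y * d1 (d2^[j] ω) x y + X2 x y * d2 (d2^[j] ω) x y
      = ∑ i ∈ Finset.range j, ((j.choose (i + 1) : ℕ) : ℝ) * bco X1 X2 i x y
          * (d2^[j - i] ω) x y
  rw [hd2top, step1, step2, step3]
  rw [Finset.sum_range_succ' (fun k => ((j.choose k : ℝ)) * deriv^[k] (fun t => Y x t) y
    * deriv^[j - k] (fun t => d2 ω x t) y) j]
  have hc0 : (j.choose 0 : ℝ) * deriv^[0] (fun t => Y x t) y
      * deriv^[j - 0] (fun t => d2 ω x t) y = Y x y * d2^[j+1] ω x y := by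
    simp only [Nat.choose_zero_right, Nat.cast_one, one_mul, Function.iterate_zero, id_eq,
      Nat.sub_zero]
    rw [slice_v j]
  rw [hc0]
  have hXY : X1 x y * Y x y = X2 x y := by
    rw [hYdef]
    field_simp
  have main : ∀ k ∈ Finset.range j,
      (j.choose (k+1) : ℝ) * deriv^[k+1] (fun t => Y x t) y
        * deriv^[j - (k+1)] (fun t => d2 ω x t) y
      = (j.choose (k+1) : ℝ) * d2^[k+1] Y x y * d2^[j - k] ω x y := by
    intro k hk
    have hk' := Finset.mem_range.mp hk
    rw [slice_u, slice_v, show j - (k+1) + 1 = j - k from by omega]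
  rw [Finset.sum_congr rfl main]
  have target_eq : ∑ i ∈ Finset.range j, ((j.choose (i + 1) : ℕ) : ℝ) * bco X1 X2 i x y
      * (d2^[j - i] ω) x y
      = ∑ i ∈ Finset.range j, (j.choose (i+1) : ℝ)
          * (-X1 x y * d2^[i+1] Y x y) * d2^[j - i] ω x y := by
    refine Finset.sum_congr rfl (fun i _ => ?_)
    have : bco X1 X2 i x y = -X1 x y * d2^[i+1] Y x y := by
      rw [hYdef]; rfl
    rw [this]
  rw [target_eq]
  have expandR : ∑ i ∈ Finset.range j, (j.choose (i+1) : ℝ)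
        * (-X1 x y * d2^[i+1] Y x y) * d2^[j - i] ω x y
      = -(X1 x y * ∑ i ∈ Finset.range j, (j.choose (i+1) : ℝ)
          * d2^[i+1] Y x y * d2^[j - i] ω x y) := by
    rw [Finset.mul_sum, ← Finset.sum_neg_distrib]
    exact Finset.sum_congr rfl (fun i _ => by ring)
  rw [expandR]
  linear_combination (-(d2^[j+1] ω x y)) * hXY
end

section
/- Suppose a ∈ K is nonzero, n is a nonzero integer, and 𝒳a = n·b0·a where b0 = −X1·∂₂(X2/X1). Let u = a^{1/n} (a local analytic branch) and v = −(X2/X1)·u, defined near a point where X1 ≠ 0 and a ≠ 0, ∞. Then the 1-form v·dx1 + u·dx2 is closed, i.e., ∂₁u = ∂₂v. -/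
noncomputable def b0 (X1 X2 : ℝ → ℝ → ℝ) : ℝ → ℝ → ℝ :=
  fun x y => - X1 x y * d2 (fun s t => X2 s t / X1 s t) x y

/-- If 𝒳a = n·b0·a with a, n ≠ 0, u a local branch of a^{1/n} (so uⁿ = a) and
v = −(X2/X1)·u, then the 1-form v·dx1 + u·dx2 is closed: ∂₁u = ∂₂v. -/
theorem closed_one_form_of_eigen (X1 X2 a u : ℝ → ℝ → ℝ) (n : ℤ) (hn : n ≠ 0)
    (hX1 : ContDiff ℝ (⊤ : ℕ∞) (fun p : ℝ × ℝ => X1 p.1 p.2))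
    (hX2 : ContDiff ℝ (⊤ : ℕ∞) (fun p : ℝ × ℝ => X2 p.1 p.2))
    (U : Set (ℝ × ℝ)) (hU : IsOpen U)
    (hX1ne : ∀ p ∈ U, X1 p.1 p.2 ≠ 0)
    (hane : ∀ p ∈ U, a p.1 p.2 ≠ 0)
    (ha : ContDiffOn ℝ (⊤ : ℕ∞) (fun p : ℝ × ℝ => a p.1 p.2) U)
    (hu : ContDiffOn ℝ (⊤ : ℕ∞) (fun p : ℝ × ℝ => u p.1 p.2) U)
    (hroot : ∀ p ∈ U, u p.1 p.2 ^ n = a p.1 p.2)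
    (heig : ∀ p ∈ U, Xop X1 X2 a p.1 p.2 = (n : ℝ) * b0 X1 X2 p.1 p.2 * a p.1 p.2) :
    ∀ p ∈ U, d1 u p.1 p.2
      = d2 (fun s t => -(X2 s t / X1 s t) * u s t) p.1 p.2 := by
  rintro ⟨x, y⟩ hp
  have hA : X1 x y ≠ 0 := hX1ne _ hp
  have hU0 : u x y ≠ 0 := by
    intro h
    apply hane _ hp
    rw [← hroot _ hp, h, zero_zpow n hn]
  -- slice differentiability of u
  have hudiff : DifferentiableAt ℝ (fun p : ℝ × ℝ => u p.1 p.2) (x, y) :=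
    (hu.contDiffAt (hU.mem_nhds hp)).differentiableAt (by simp)
  have hu1 : HasDerivAt (fun t => u t y) (d1 u x y) x := by
    have : DifferentiableAt ℝ (fun t => u t y) x :=
      by have := hudiff.comp x (by fun_prop : DifferentiableAt ℝ (fun t : ℝ => (t, y)) x); exact this
    exact this.hasDerivAt
  have hu2 : HasDerivAt (fun t => u x t) (d2 u x y) y := by
    have : DifferentiableAt ℝ (fun t => u x t) y :=
      by have := hudiff.comp y (by fun_prop : DifferentiableAt ℝ (fun t : ℝ => (x, t)) y); exact this
    exact this.hasDerivAt
  -- slice derivatives of X1, X2 in second variable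
  have hX1s : HasDerivAt (fun t => X1 x t) (d2 X1 x y) y := by
    have : DifferentiableAt ℝ (fun t => X1 x t) y :=
      by have := (hX1.differentiable (by simp) (x, y)).comp y (by fun_prop : DifferentiableAt ℝ (fun t : ℝ => (x, t)) y); exact this
    exact this.hasDerivAt
  have hX2s : HasDerivAt (fun t => X2 x t) (d2 X2 x y) y := by
    have : DifferentiableAt ℝ (fun t => X2 x t) y :=
      by have := (hX2.differentiable (by simp) (x, y)).comp y (by fun_prop : DifferentiableAt ℝ (fun t : ℝ => (x, t)) y); exact this
    exact this.hasDerivAt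
  -- quotient w = X2/X1 slice
  have hwdiv := hX2s.div hX1s hA
  set q : ℝ := d2 (fun s t => X2 s t / X1 s t) x y with hqdef
  have hq : HasDerivAt (fun t => X2 x t / X1 x t) q y :=
    hwdiv.differentiableAt.hasDerivAt
  -- a agrees with u^n near the slices
  have hmem1 : {t : ℝ | (t, y) ∈ U} ∈ nhds x :=
    (hU.preimage (by fun_prop : Continuous fun t : ℝ => (t, y))).mem_nhds hp
  have hmem2 : {t : ℝ | (x, t) ∈ U} ∈ nhds y :=
    (hU.preimage (by fun_prop : Continuous fun t : ℝ => (x, t))).mem_nhds hp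
  have he1 : (fun t => a t y) =ᶠ[nhds x] fun t => u t y ^ n :=
    Filter.eventuallyEq_of_mem hmem1 fun t ht => (hroot _ ht).symm
  have he2 : (fun t => a x t) =ᶠ[nhds y] fun t => u x t ^ n :=
    Filter.eventuallyEq_of_mem hmem2 fun t ht => (hroot _ ht).symm
  have hz1 : HasDerivAt (fun t => a t y)
      ((n : ℝ) * u x y ^ (n - 1) * d1 u x y) x := by
    have := (hasDerivAt_zpow n (u x y) (Or.inl hU0)).comp x hu1
    exact this.congr_of_eventuallyEq he1
  have hz2 : HasDerivAt (fun t => a x t)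
      ((n : ℝ) * u x y ^ (n - 1) * d2 u x y) y := by
    have := (hasDerivAt_zpow n (u x y) (Or.inl hU0)).comp y hu2
    exact this.congr_of_eventuallyEq he2
  -- derivative of v in second variable
  have hv : HasDerivAt (fun t => -(X2 x t / X1 x t) * u x t)
      (-q * u x y + -(X2 x y / X1 x y) * d2 u x y) y := hq.neg.mul hu2
  -- turn heig into an algebraic equation
  have heq := heig _ hp
  simp only [Xop, b0] at heq
  rw [show d1 a x y = (n : ℝ) * u x y ^ (n - 1) * d1 u x y from hz1.deriv,
      show d2 a x y = (n : ℝ) * u x y ^ (n - 1) * d2 u x y from hz2.deriv,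
      ← hqdef, ← hroot _ hp] at heq
  -- rewrite goal
  have hgoal : d2 (fun s t => -(X2 s t / X1 s t) * u s t) x y
      = -q * u x y + -(X2 x y / X1 x y) * d2 u x y := hv.deriv
  rw [hgoal]
  -- algebra
  set A := X1 x y
  set B := X2 x y
  set U0 := u x y
  set u1 := d1 u x y
  set u2 := d2 u x y
  have hP : U0 ^ (n - 1) ≠ 0 := zpow_ne_zero _ hU0
  have hzn : U0 ^ n = U0 ^ (n - 1) * U0 := by
    rw [← zpow_add_one₀ hU0]; ring_nf
  rw [hzn] at heq
  have hnR : (n : ℝ) ≠ 0 := Int.cast_ne_zero.mpr hn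
  have key : A * u1 + B * u2 = -A * q * U0 := by
    apply mul_left_cancel₀ (mul_ne_zero hnR hP)
    linear_combination heq
  apply mul_left_cancel₀ hA
  field_simp
  linear_combination key
end

section
/- Suppose a ∈ K satisfies 𝒳a = b0·a + b1, where b0 = −X1·∂₂(X2/X1) and b1 = −X1·∂₂²(X2/X1). Let b = −(X2/X1)·a + b0/X1. Then ∂₁a = ∂₂b wherever X1 ≠ 0, so the 1-form b·dx1 + a·dx2 is closed. -/
/-- If 𝒳a = b0·a + b1 and b = −(X2/X1)·a + b0/X1, then ∂₁a = ∂₂b wherever X1 ≠ 0,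
so the 1-form b·dx1 + a·dx2 is closed. -/
theorem closed_form_order_two (X1 X2 a : ℝ → ℝ → ℝ)
    (hX1 : ContDiff ℝ (⊤ : ℕ∞) (fun p : ℝ × ℝ => X1 p.1 p.2))
    (hX2 : ContDiff ℝ (⊤ : ℕ∞) (fun p : ℝ × ℝ => X2 p.1 p.2))
    (ha : ContDiff ℝ (⊤ : ℕ∞) (fun p : ℝ × ℝ => a p.1 p.2))
    (heq : ∀ x y : ℝ, X1 x y ≠ 0 →
      Xop X1 X2 a x y = bco X1 X2 0 x y * a x y + bco X1 X2 1 x y) :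
    ∀ x y : ℝ, X1 x y ≠ 0 →
      d1 a x y
        = d2 (fun s t => -(X2 s t / X1 s t) * a s t + bco X1 X2 0 s t / X1 s t) x y := by
  intro x y hx
  -- one-variable smoothness
  have hline : ContDiff ℝ (⊤:ℕ∞) (fun t : ℝ => (x, t)) := contDiff_const.prodMk contDiff_id
  have hX1c : ContDiff ℝ (⊤:ℕ∞) (fun t => X1 x t) := (hX1.of_le (mod_cast le_top)).comp hline
  have hX2c : ContDiff ℝ (⊤:ℕ∞) (fun t => X2 x t) := (hX2.of_le (mod_cast le_top)).comp hline
  have hac : ContDiff ℝ (⊤:ℕ∞) (fun t => a x t) := (ha.of_le (mod_cast le_top)).comp hline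
  set h : ℝ → ℝ := fun t => X2 x t / X1 x t with hh
  set S : Set ℝ := {t | X1 x t ≠ 0} with hS
  have hSopen : IsOpen S := isOpen_compl_singleton.preimage hX1c.continuous
  have hyS : y ∈ S := hx
  have hhS : ContDiffOn ℝ (⊤:ℕ∞) h S :=
    (hX2c.contDiffOn).div (hX1c.contDiffOn) (fun t ht => ht)
  have hdhS : ContDiffOn ℝ (⊤:ℕ∞) (deriv h) S :=
    hhS.deriv_of_isOpen hSopen (by exact_mod_cast le_top)
  have hdh : DifferentiableAt ℝ h y :=
    (hhS.differentiableOn (by simp)).differentiableAt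
      (hSopen.mem_nhds hyS)
  have hddh : DifferentiableAt ℝ (deriv h) y :=
    (hdhS.differentiableOn (by simp)).differentiableAt
      (hSopen.mem_nhds hyS)
  have hda : DifferentiableAt ℝ (fun t => a x t) y :=
    hac.differentiable (by simp) y
  -- key identities relating d2 to one-variable deriv's
  have hd2g : ∀ t, d2 (fun s t' => X2 s t' / X1 s t') x t = deriv h t := fun t => rfl
  -- eventual equality of the function under d2 with the nice function
  have hev : (fun t => -(X2 x t / X1 x t) * a x t + bco X1 X2 0 x t / X1 x t)
      =ᶠ[nhds y] (fun t => -(h t * a x t) - deriv h t) := by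
    filter_upwards [hSopen.mem_nhds hyS] with t ht
    have ht' : X1 x t ≠ 0 := ht
    simp only [bco, show (0:ℕ)+1=1 from rfl, Function.iterate_one, hd2g, hh]
    field_simp
    ring
  have hgoal2 : d2 (fun s t => -(X2 s t / X1 s t) * a s t + bco X1 X2 0 s t / X1 s t) x y
      = deriv (fun t => -(h t * a x t) - deriv h t) y := by
    exact hev.deriv_eq
  have hderG : deriv (fun t => -(h t * a x t) - deriv h t) y
      = -(deriv h y * a x y + h y * deriv (fun t => a x t) y) - deriv (deriv h) y := by
    rw [deriv_fun_sub (f := fun t => -(h t * a x t)) ((hdh.mul hda).neg) hddh, deriv.fun_neg, deriv_fun_mul hdh hda]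
  -- use the hypothesis heq
  have key := heq x y hx
  simp only [d1]
  rw [hgoal2, hderG]
  simp only [Xop, bco, d1, d2, show (0:ℕ)+1=1 from rfl, show (1:ℕ)+1=2 from rfl,
    Function.iterate_one,
    show d2^[2] (fun s t => X2 s t / X1 s t) = d2 (d2 (fun s t => X2 s t / X1 s t)) from rfl] at key
  rw [← hh] at key
  rw [show h y = X2 x y / X1 x y from rfl]
  field_simp
  linear_combination key
end

section
/- Suppose η is a nonvanishing analytic function with 𝒳η = b0·η on an open set where X1 ≠ 0. Then the 1-form v·dx1 + η·dx2 with v = −(X2/X1)·η is closed, and any local primitive ω (i.e., ∂₁ω = v, ∂₂ω = η) is a nonconstant analytic solution of X1·∂₁ω + X2·∂₂ω = 0. -/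
/-- If η is a nonvanishing analytic function with 𝒳η = b0·η on an open set where X1 ≠ 0,
then the 1-form v·dx1 + η·dx2 with v = −(X2/X1)·η is closed, and any local primitive ω
is a nonconstant analytic solution of X1·∂₁ω + X2·∂₂ω = 0. -/
theorem primitive_is_first_integral (X1 X2 η ω : ℝ → ℝ → ℝ)
    (hX1 : ContDiff ℝ (⊤ : ℕ∞) (fun p : ℝ × ℝ => X1 p.1 p.2))
    (hX2 : ContDiff ℝ (⊤ : ℕ∞) (fun p : ℝ × ℝ => X2 p.1 p.2))
    (U : Set (ℝ × ℝ)) (hU : IsOpen U) (hne : U.Nonempty)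
    (hX1ne : ∀ p ∈ U, X1 p.1 p.2 ≠ 0)
    (hηA : AnalyticOnNhd ℝ (fun p : ℝ × ℝ => η p.1 p.2) U)
    (hηne : ∀ p ∈ U, η p.1 p.2 ≠ 0)
    (hη : ∀ p ∈ U, Xop X1 X2 η p.1 p.2 = b0 X1 X2 p.1 p.2 * η p.1 p.2)
    (hω1 : ∀ p ∈ U, d1 ω p.1 p.2 = -(X2 p.1 p.2 / X1 p.1 p.2) * η p.1 p.2)
    (hω2 : ∀ p ∈ U, d2 ω p.1 p.2 = η p.1 p.2)
    (hωA : AnalyticOnNhd ℝ (fun p : ℝ × ℝ => ω p.1 p.2) U) :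
    (∀ p ∈ U, d1 η p.1 p.2 = d2 (fun s t => -(X2 s t / X1 s t) * η s t) p.1 p.2) ∧
    (∀ p ∈ U, X1 p.1 p.2 * d1 ω p.1 p.2 + X2 p.1 p.2 * d2 ω p.1 p.2 = 0) ∧
    (∃ p ∈ U, ∃ q ∈ U, ω p.1 p.2 ≠ ω q.1 q.2) := by
  have hlin : ∀ x : ℝ, DifferentiableAt ℝ (fun t : ℝ => (x, t)) (0 : ℝ) → True := fun _ _ => trivial
  have hcurve : ∀ p : ℝ × ℝ, DifferentiableAt ℝ (fun t : ℝ => (p.1, t)) p.2 :=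
    fun p => DifferentiableAt.prodMk (differentiableAt_const p.1) differentiableAt_id
  have hX1d : ∀ p : ℝ × ℝ, DifferentiableAt ℝ (fun t => X1 p.1 t) p.2 := fun p =>
    ((hX1.differentiable (by simp) (p.1, p.2)).comp p.2 (hcurve p))
  have hX2d : ∀ p : ℝ × ℝ, DifferentiableAt ℝ (fun t => X2 p.1 t) p.2 := fun p =>
    ((hX2.differentiable (by simp) (p.1, p.2)).comp p.2 (hcurve p))
  have hηd : ∀ p ∈ U, DifferentiableAt ℝ (fun t => η p.1 t) p.2 := fun p hp =>
    ((hηA p hp).differentiableAt.comp (g := fun q : ℝ × ℝ => η q.1 q.2) p.2 (hcurve p))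
  refine ⟨?_, ?_, ?_⟩
  · intro p hp
    have hA := hX1ne p hp
    have hq : DifferentiableAt ℝ (fun t => X2 p.1 t / X1 p.1 t) p.2 :=
      (hX2d p).div (hX1d p) hA
    have hprod : d2 (fun s t => -(X2 s t / X1 s t) * η s t) p.1 p.2 =
        -(d2 (fun s t => X2 s t / X1 s t) p.1 p.2) * η p.1 p.2 +
          -(X2 p.1 p.2 / X1 p.1 p.2) * d2 η p.1 p.2 := by
      simp only [d2]
      rw [deriv_fun_mul (c := fun t => -(X2 p.1 t / X1 p.1 t)) hq.neg (hηd p hp), deriv.fun_neg]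
    have hη' := hη p hp
    simp only [Xop, b0] at hη'
    rw [hprod]
    have hD2 := d2 (fun s t => X2 s t / X1 s t) p.1 p.2
    field_simp at hη' ⊢
    nlinarith [hη', sq_nonneg (X1 p.1 p.2)]
  · intro p hp
    have hA := hX1ne p hp
    rw [hω1 p hp, hω2 p hp]
    field_simp
    ring
  · by_contra h
    push_neg at h
    obtain ⟨p, hp⟩ := hne
    obtain ⟨ε, hε, hball⟩ := Metric.isOpen_iff.1 hU p hp
    have hconst : (fun t => ω p.1 t) =ᶠ[nhds p.2] (fun _ => ω p.1 p.2) := by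
      filter_upwards [Metric.ball_mem_nhds p.2 hε] with t ht
      have hmem : (p.1, t) ∈ U := by
        apply hball
        simp [Metric.mem_ball, Prod.dist_eq, dist_self]
        exact Metric.mem_ball.1 ht
      exact h (p.1, t) hmem p hp
    have : d2 ω p.1 p.2 = 0 := by
      simp only [d2]
      rw [hconst.deriv_eq]
      simp
    rw [hω2 p hp] at this
    exact hηne p hp this
end

section
/- Suppose a ∈ K satisfies 𝒳a = 2·b0·a + b2 where b2 = −X1·∂₂³(X2/X1). Define f(x1,x2,u) = −∂₂²(X2/X1) − (X2/X1)·a − ∂₂(X2/X1)·u − ½·(X2/X1)·u² and g(x1,x2,u) = a + ½·u². Then the compatibility condition (∂/∂x2 + g·∂/∂u)f = (∂/∂x1 + f·∂/∂u)g holds identically wherever X1 ≠ 0 and a is analytic. -/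
open scoped ContDiff


/-- partial derivatives of a function of three variables -/
noncomputable def D1 (h : ℝ → ℝ → ℝ → ℝ) : ℝ → ℝ → ℝ → ℝ :=
  fun x y u => deriv (fun t => h t y u) x
noncomputable def D2 (h : ℝ → ℝ → ℝ → ℝ) : ℝ → ℝ → ℝ → ℝ :=
  fun x y u => deriv (fun t => h x t u) y
noncomputable def Du (h : ℝ → ℝ → ℝ → ℝ) : ℝ → ℝ → ℝ → ℝ :=
  fun x y u => deriv (fun t => h x y t) u

lemma slice2 (F : ℝ × ℝ → ℝ) (x y : ℝ) (hF : DifferentiableAt ℝ F (x, y)) :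
    HasDerivAt (fun t => F (x, t)) (fderiv ℝ F (x, y) (0, 1)) y := by
  have h1 : HasDerivAt (fun t : ℝ => ((x, t) : ℝ × ℝ)) ((0 : ℝ), (1 : ℝ)) y :=
    (hasDerivAt_const y x).prodMk (hasDerivAt_id y)
  exact hF.hasFDerivAt.comp_hasDerivAt y h1

lemma slice1 (F : ℝ × ℝ → ℝ) (x y : ℝ) (hF : DifferentiableAt ℝ F (x, y)) :
    HasDerivAt (fun s => F (s, y)) (fderiv ℝ F (x, y) (1, 0)) x := by
  have h1 : HasDerivAt (fun s : ℝ => ((s, y) : ℝ × ℝ)) ((1 : ℝ), (0 : ℝ)) x :=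
    (hasDerivAt_id x).prodMk (hasDerivAt_const x y)
  exact hF.hasFDerivAt.comp_hasDerivAt x h1


/-- If 𝒳a = 2·b0·a + b2, then with f = −∂₂²(X2/X1) − (X2/X1)a − ∂₂(X2/X1)u − ½(X2/X1)u²
and g = a + ½u², the compatibility condition (∂₂ + g∂ᵤ)f = (∂₁ + f∂ᵤ)g holds
wherever X1 ≠ 0. -/
theorem compatibility_order_three (X1 X2 a : ℝ → ℝ → ℝ)
    (hX1 : ContDiff ℝ (⊤ : ℕ∞) (fun p : ℝ × ℝ => X1 p.1 p.2))
    (hX2 : ContDiff ℝ (⊤ : ℕ∞) (fun p : ℝ × ℝ => X2 p.1 p.2))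
    (ha : ContDiff ℝ (⊤ : ℕ∞) (fun p : ℝ × ℝ => a p.1 p.2))
    (heq : ∀ x y : ℝ, X1 x y ≠ 0 →
      Xop X1 X2 a x y = 2 * bco X1 X2 0 x y * a x y + bco X1 X2 2 x y) :
    ∀ x y u : ℝ, X1 x y ≠ 0 →
      (letI Q : ℝ → ℝ → ℝ := fun s t => X2 s t / X1 s t
       letI f : ℝ → ℝ → ℝ → ℝ := fun s t w =>
         - d2 (d2 Q) s t - Q s t * a s t - d2 Q s t * w - (1/2) * Q s t * w ^ 2
       letI g : ℝ → ℝ → ℝ → ℝ := fun s t w => a s t + (1/2) * w ^ 2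
       D2 f x y u + g x y u * Du f x y u = D1 g x y u + f x y u * Du g x y u) := by
  intro x y u hx
  -- the open set where X1 ≠ 0
  set U : Set (ℝ × ℝ) := (fun p : ℝ × ℝ => X1 p.1 p.2) ⁻¹' {0}ᶜ with hUdef
  have hUo : IsOpen U := isOpen_compl_singleton.preimage hX1.continuous
  have hmemU : ∀ s t : ℝ, X1 s t ≠ 0 → ((s, t) : ℝ × ℝ) ∈ U := fun s t h => h
  -- the smooth uncurried functions
  have hF0 : ContDiffOn ℝ ∞ (fun p : ℝ × ℝ => X2 p.1 p.2 / X1 p.1 p.2) U :=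
    ((hX2.of_le (mod_cast le_top)).contDiffOn).div ((hX1.of_le (mod_cast le_top)).contDiffOn) fun p hp => hp
  have pd : ∀ {F : ℝ × ℝ → ℝ}, ContDiffOn ℝ ∞ F U →
      ContDiffOn ℝ ∞ (fun p => fderiv ℝ F p ((0:ℝ), (1:ℝ))) U := fun h =>
    (h.fderiv_of_isOpen hUo (by simp)).clm_apply contDiffOn_const
  have hdiff : ∀ {F : ℝ × ℝ → ℝ}, ContDiffOn ℝ ∞ F U → ∀ p ∈ U, DifferentiableAt ℝ F p :=
    fun h p hp => (h.contDiffAt (hUo.mem_nhds hp)).differentiableAt (by simp)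
  set F0 : ℝ × ℝ → ℝ := fun p => X2 p.1 p.2 / X1 p.1 p.2 with hF0def
  set F1 : ℝ × ℝ → ℝ := fun p => fderiv ℝ F0 p ((0:ℝ), (1:ℝ)) with hF1def
  set F2 : ℝ × ℝ → ℝ := fun p => fderiv ℝ F1 p ((0:ℝ), (1:ℝ)) with hF2def
  set F3 : ℝ × ℝ → ℝ := fun p => fderiv ℝ F2 p ((0:ℝ), (1:ℝ)) with hF3def
  have hF1 : ContDiffOn ℝ ∞ F1 U := pd hF0
  have hF2 : ContDiffOn ℝ ∞ F2 U := pd hF1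
  have hF3 : ContDiffOn ℝ ∞ F3 U := pd hF2
  -- eventual membership along vertical lines
  have hev : ∀ s t : ℝ, ((s, t) : ℝ × ℝ) ∈ U → ∀ᶠ t' in nhds t, ((s, t') : ℝ × ℝ) ∈ U :=
    fun s t h =>
      (continuous_const.prodMk continuous_id).continuousAt.preimage_mem_nhds (hUo.mem_nhds h)
  -- identification of iterated d2 with fderiv slices
  have E1 : ∀ s t : ℝ, ((s, t) : ℝ × ℝ) ∈ U →
      d2 (fun s t => X2 s t / X1 s t) s t = F1 (s, t) := by
    intro s t h
    exact (slice2 F0 s t (hdiff hF0 _ h)).deriv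
  have E2 : ∀ s t : ℝ, ((s, t) : ℝ × ℝ) ∈ U →
      d2 (d2 (fun s t => X2 s t / X1 s t)) s t = F2 (s, t) := by
    intro s t h
    have heq' : (fun t' => d2 (fun s t => X2 s t / X1 s t) s t') =ᶠ[nhds t]
        (fun t' => F1 (s, t')) := (hev s t h).mono fun t' ht' => E1 s t' ht'
    show deriv (fun t' => d2 (fun s t => X2 s t / X1 s t) s t') t = _
    rw [heq'.deriv_eq]
    exact (slice2 F1 s t (hdiff hF1 _ h)).deriv
  have E3 : ∀ s t : ℝ, ((s, t) : ℝ × ℝ) ∈ U →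
      d2 (d2 (d2 (fun s t => X2 s t / X1 s t))) s t = F3 (s, t) := by
    intro s t h
    have heq' : (fun t' => d2 (d2 (fun s t => X2 s t / X1 s t)) s t') =ᶠ[nhds t]
        (fun t' => F2 (s, t')) := (hev s t h).mono fun t' ht' => E2 s t' ht'
    show deriv (fun t' => d2 (d2 (fun s t => X2 s t / X1 s t)) s t') t = _
    rw [heq'.deriv_eq]
    exact (slice2 F2 s t (hdiff hF2 _ h)).deriv
  have hm : ((x, y) : ℝ × ℝ) ∈ U := hmemU x y hx
  -- slice derivatives at (x,y)
  have hQs : HasDerivAt (fun t => X2 x t / X1 x t) (F1 (x, y)) y := slice2 F0 x y (hdiff hF0 _ hm)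
  have hq1s : HasDerivAt (fun t => d2 (fun s t => X2 s t / X1 s t) x t) (F2 (x, y)) y := by
    refine HasDerivAt.congr_of_eventuallyEq (slice2 F1 x y (hdiff hF1 _ hm)) ?_
    exact (hev x y hm).mono fun t' ht' => E1 x t' ht'
  have hq2s : HasDerivAt (fun t => d2 (d2 (fun s t => X2 s t / X1 s t)) x t) (F3 (x, y)) y := by
    refine HasDerivAt.congr_of_eventuallyEq (slice2 F2 x y (hdiff hF2 _ hm)) ?_
    exact (hev x y hm).mono fun t' ht' => E2 x t' ht'
  have hA : ContDiff ℝ ∞ (fun p : ℝ × ℝ => a p.1 p.2) := ha.of_le (mod_cast le_top)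
  have has2 : HasDerivAt (fun t => a x t)
      (fderiv ℝ (fun p : ℝ × ℝ => a p.1 p.2) (x, y) ((0:ℝ), (1:ℝ))) y :=
    slice2 _ x y (hA.differentiable (by simp)).differentiableAt
  have has1 : HasDerivAt (fun s => a s y)
      (fderiv ℝ (fun p : ℝ × ℝ => a p.1 p.2) (x, y) ((1:ℝ), (0:ℝ))) x :=
    slice1 _ x y (hA.differentiable (by simp)).differentiableAt
  set a1 : ℝ := fderiv ℝ (fun p : ℝ × ℝ => a p.1 p.2) (x, y) ((1:ℝ), (0:ℝ)) with ha1def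
  set a2 : ℝ := fderiv ℝ (fun p : ℝ × ℝ => a p.1 p.2) (x, y) ((0:ℝ), (1:ℝ)) with ha2def
  -- the key algebraic relation from heq
  have hkey : X1 x y * a1 + X2 x y * a2 =
      2 * (-X1 x y * F1 (x, y)) * a x y + (-X1 x y * F3 (x, y)) := by
    have h := heq x y hx
    simp only [Xop, bco, Function.iterate_succ_apply', Function.iterate_zero_apply,
      Function.iterate_one] at h
    rw [E1 x y hm, E3 x y hm] at h
    have hd1 : d1 a x y = a1 := has1.deriv
    have hd2 : d2 a x y = a2 := has2.deriv
    rw [hd1, hd2] at h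
    exact h
  -- compute the four derivatives in the goal
  dsimp only [D1, D2, Du]
  have hD2f : HasDerivAt (fun t =>
      -d2 (d2 (fun s t => X2 s t / X1 s t)) x t - X2 x t / X1 x t * a x t -
        d2 (fun s t => X2 s t / X1 s t) x t * u - 1 / 2 * (X2 x t / X1 x t) * u ^ 2)
      (-F3 (x, y) - (F1 (x, y) * a x y + X2 x y / X1 x y * a2) - F2 (x, y) * u -
        1 / 2 * F1 (x, y) * u ^ 2) y := by
    have h4 : HasDerivAt (fun t => 1 / 2 * (X2 x t / X1 x t) * u ^ 2)
        (1 / 2 * F1 (x, y) * u ^ 2) y := (hQs.const_mul (1/2)).mul_const (u ^ 2)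
    exact ((hq2s.neg.sub (hQs.mul has2)).sub (hq1s.mul_const u)).sub h4
  have hDuf : HasDerivAt (fun t : ℝ =>
      -d2 (d2 (fun s t => X2 s t / X1 s t)) x y - X2 x y / X1 x y * a x y -
        d2 (fun s t => X2 s t / X1 s t) x y * t - 1 / 2 * (X2 x y / X1 x y) * t ^ 2)
      (-(d2 (fun s t => X2 s t / X1 s t) x y) - X2 x y / X1 x y * u) u := by
    have h3 : HasDerivAt (fun t : ℝ => d2 (fun s t => X2 s t / X1 s t) x y * t)
        (d2 (fun s t => X2 s t / X1 s t) x y) u := by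
      simpa using (hasDerivAt_id u).const_mul (d2 (fun s t => X2 s t / X1 s t) x y)
    have h4 : HasDerivAt (fun t : ℝ => 1 / 2 * (X2 x y / X1 x y) * t ^ 2)
        (X2 x y / X1 x y * u) u := by
      have := (hasDerivAt_pow 2 u).const_mul (1 / 2 * (X2 x y / X1 x y))
      refine this.congr_deriv ?_
      ring
    have hc : HasDerivAt (fun _ : ℝ =>
        -d2 (d2 (fun s t => X2 s t / X1 s t)) x y - X2 x y / X1 x y * a x y) (0 : ℝ) u :=
      hasDerivAt_const _ _
    have := (hc.sub h3).sub h4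
    refine this.congr_deriv ?_
    ring
  have hD1g : HasDerivAt (fun t => a t y + 1 / 2 * u ^ 2) a1 x := has1.add_const _
  have hDug : HasDerivAt (fun t : ℝ => a x y + 1 / 2 * t ^ 2) u u := by
    have := ((hasDerivAt_pow 2 u).const_mul (1 / 2 : ℝ)).const_add (a x y)
    refine this.congr_deriv ?_
    push_cast
    ring
  rw [hD2f.deriv, hDuf.deriv, hD1g.deriv, hDug.deriv, E1 x y hm, E2 x y hm]
  have hX1v : X1 x y ≠ 0 := hx
  field_simp
  linear_combination (-(2:ℝ)) * hkey
end

section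
/- Let u be an analytic solution of the system ∂₂u = a + ½u² and ∂₁u = −∂₂²(X2/X1) − (X2/X1)a − ∂₂(X2/X1)·u − ½(X2/X1)u², where 𝒳a = 2b0·a + b2. Let η = exp of a primitive of the closed form (−∂₂(X2/X1) − (X2/X1)u)dx1 + u·dx2. Then 𝒳η = b0·η and η·∂₂²η = (3/2)(∂₂η)² + a·η². -/
lemma slice2_hasDerivAt {f : ℝ → ℝ → ℝ} {U : Set (ℝ × ℝ)} (hU : IsOpen U)
    (hf : ContDiffOn ℝ (⊤ : ℕ∞) (fun p : ℝ × ℝ => f p.1 p.2) U) {q : ℝ × ℝ} (hq : q ∈ U) :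
    HasDerivAt (fun t => f q.1 t) (d2 f q.1 q.2) q.2 := by
  have hdf : DifferentiableAt ℝ (fun p : ℝ × ℝ => f p.1 p.2) q :=
    (hf.contDiffAt (hU.mem_nhds hq)).differentiableAt (by simp)
  have hcomp : DifferentiableAt ℝ (fun t : ℝ => f q.1 t) q.2 := by
    have h2 : DifferentiableAt ℝ (fun t : ℝ => ((q.1, t) : ℝ × ℝ)) q.2 :=
      (differentiableAt_const _).prodMk differentiableAt_id
    have := hdf.comp q.2 h2
    exact this
  simpa [d2] using hcomp.hasDerivAt

lemma slice1_hasDerivAt {f : ℝ → ℝ → ℝ} {U : Set (ℝ × ℝ)} (hU : IsOpen U)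
    (hf : ContDiffOn ℝ (⊤ : ℕ∞) (fun p : ℝ × ℝ => f p.1 p.2) U) {q : ℝ × ℝ} (hq : q ∈ U) :
    HasDerivAt (fun t => f t q.2) (d1 f q.1 q.2) q.1 := by
  have hdf : DifferentiableAt ℝ (fun p : ℝ × ℝ => f p.1 p.2) q :=
    (hf.contDiffAt (hU.mem_nhds hq)).differentiableAt (by simp)
  have hcomp : DifferentiableAt ℝ (fun t : ℝ => f t q.2) q.1 := by
    have h2 : DifferentiableAt ℝ (fun t : ℝ => ((t, q.2) : ℝ × ℝ)) q.1 :=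
      differentiableAt_id.prodMk (differentiableAt_const _)
    have := hdf.comp q.1 h2
    exact this
  simpa [d1] using hcomp.hasDerivAt

/-- Let u solve ∂₂u = a + ½u², ∂₁u = −∂₂²(X2/X1) − (X2/X1)a − ∂₂(X2/X1)u − ½(X2/X1)u²,
where 𝒳a = 2b0·a + b2, and let η = exp(ψ) where ψ is a primitive of the closed form
(−∂₂(X2/X1) − (X2/X1)u)dx1 + u·dx2. Then 𝒳η = b0·η and η·∂₂²η = (3/2)(∂₂η)² + a·η². -/
theorem eta_properties_order_three (X1 X2 a u ψ : ℝ → ℝ → ℝ)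
    (hX1 : ContDiff ℝ (⊤ : ℕ∞) (fun p : ℝ × ℝ => X1 p.1 p.2))
    (hX2 : ContDiff ℝ (⊤ : ℕ∞) (fun p : ℝ × ℝ => X2 p.1 p.2))
    (U : Set (ℝ × ℝ)) (hU : IsOpen U) (hconn : IsPreconnected U)
    (hX1ne : ∀ p ∈ U, X1 p.1 p.2 ≠ 0)
    (ha : ContDiffOn ℝ (⊤ : ℕ∞) (fun p : ℝ × ℝ => a p.1 p.2) U)
    (hu : ContDiffOn ℝ (⊤ : ℕ∞) (fun p : ℝ × ℝ => u p.1 p.2) U)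
    (hψ : ContDiffOn ℝ (⊤ : ℕ∞) (fun p : ℝ × ℝ => ψ p.1 p.2) U)
    (haeq : ∀ p ∈ U, Xop X1 X2 a p.1 p.2
      = 2 * bco X1 X2 0 p.1 p.2 * a p.1 p.2 + bco X1 X2 2 p.1 p.2)
    (hu2 : ∀ p ∈ U, d2 u p.1 p.2 = a p.1 p.2 + (1/2) * (u p.1 p.2) ^ 2)
    (hu1 : ∀ p ∈ U, d1 u p.1 p.2
      = - d2 (d2 (fun s t => X2 s t / X1 s t)) p.1 p.2
        - (X2 p.1 p.2 / X1 p.1 p.2) * a p.1 p.2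
        - d2 (fun s t => X2 s t / X1 s t) p.1 p.2 * u p.1 p.2
        - (1/2) * (X2 p.1 p.2 / X1 p.1 p.2) * (u p.1 p.2) ^ 2)
    (hψ1 : ∀ p ∈ U, d1 ψ p.1 p.2
      = - d2 (fun s t => X2 s t / X1 s t) p.1 p.2
        - (X2 p.1 p.2 / X1 p.1 p.2) * u p.1 p.2)
    (hψ2 : ∀ p ∈ U, d2 ψ p.1 p.2 = u p.1 p.2)
    (η : ℝ → ℝ → ℝ) (hη : η = fun s t => Real.exp (ψ s t)) :
    ∀ p ∈ U,
      Xop X1 X2 η p.1 p.2 = bco X1 X2 0 p.1 p.2 * η p.1 p.2 ∧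
      η p.1 p.2 * d2 (d2 η) p.1 p.2
        = (3/2) * (d2 η p.1 p.2) ^ 2 + a p.1 p.2 * (η p.1 p.2) ^ 2 := by

  intro p hp
  -- derivative of η in second variable at any point of U
  have hd2η : ∀ q ∈ U, HasDerivAt (fun t => η q.1 t) (η q.1 q.2 * u q.1 q.2) q.2 := by
    intro q hq
    have h := (slice2_hasDerivAt hU hψ hq).exp
    rw [hψ2 q hq] at h
    simpa [hη] using h
  have hd1η : HasDerivAt (fun t => η t p.2) (η p.1 p.2 * d1 ψ p.1 p.2) p.1 := by
    have h := (slice1_hasDerivAt hU hψ hp).exp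
    simpa [hη] using h
  have hd2ηv : d2 η p.1 p.2 = η p.1 p.2 * u p.1 p.2 := (hd2η p hp).deriv
  have hd1ηv : d1 η p.1 p.2 = η p.1 p.2 * d1 ψ p.1 p.2 := hd1η.deriv
  constructor
  · rw [Xop, hd1ηv, hd2ηv, hψ1 p hp]
    have hb : bco X1 X2 0 p.1 p.2
        = - X1 p.1 p.2 * d2 (fun s t => X2 s t / X1 s t) p.1 p.2 := by
      simp [bco]
    rw [hb]
    have hx1 := hX1ne p hp
    field_simp
    ring
  · -- second derivative of η in second variable
    have hev : (fun t => d2 η p.1 t) =ᶠ[nhds p.2] fun t => η p.1 t * u p.1 t := by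
      have hVopen : IsOpen {t : ℝ | ((p.1, t) : ℝ × ℝ) ∈ U} :=
        hU.preimage (by fun_prop : Continuous fun t : ℝ => ((p.1, t) : ℝ × ℝ))
      have hVmem : p.2 ∈ {t : ℝ | ((p.1, t) : ℝ × ℝ) ∈ U} := hp
      filter_upwards [hVopen.mem_nhds hVmem] with t ht
      exact (hd2η (p.1, t) ht).deriv
    have huD : HasDerivAt (fun t => u p.1 t) (d2 u p.1 p.2) p.2 :=
      slice2_hasDerivAt hU hu hp
    have hprod : HasDerivAt (fun t => η p.1 t * u p.1 t)
        (η p.1 p.2 * u p.1 p.2 * u p.1 p.2 + η p.1 p.2 * d2 u p.1 p.2) p.2 :=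
      (hd2η p hp).mul huD
    have hdd : d2 (d2 η) p.1 p.2
        = η p.1 p.2 * u p.1 p.2 * u p.1 p.2 + η p.1 p.2 * d2 u p.1 p.2 := by
      have : d2 (d2 η) p.1 p.2 = deriv (fun t => η p.1 t * u p.1 t) p.2 := by
        simp only [d2]
        exact hev.deriv_eq
      rw [this, hprod.deriv]
    rw [hdd, hd2ηv, hu2 p hp]
    ring
end

section
/- For the van der Pol system ẋ1 = x2 − μ(x1³/3 − x1), ẋ2 = −x1 with μ ≠ 0 (writing X1 = x2 − μ(x1³/3 − x1), X2 = −x1, 𝒳 = X1∂₁ + X2∂₂), there is no rational function a(x1,x2) satisfying X1³·𝒳a + 2x1·X1²·a + 6x1 = 0, given that the van der Pol system has no algebraic invariant curve (Cheng–Odani theorem may be assumed). -/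
open MvPolynomial

/-- X1 for the van der Pol system: x2 − μ(x1³/3 − x1). -/
noncomputable def vdpX1 (μ : ℝ) : MvPolynomial (Fin 2) ℝ :=
  X 1 - C μ * (C (3⁻¹ : ℝ) * X 0 ^ 3 - X 0)

/-- X2 for the van der Pol system: −x1. -/
noncomputable def vdpX2 : MvPolynomial (Fin 2) ℝ := - X 0

/-- The vector field 𝒳 acting on polynomials: 𝒳p = X1·∂₁p + X2·∂₂p. -/
noncomputable def vdpXop (μ : ℝ) (p : MvPolynomial (Fin 2) ℝ) : MvPolynomial (Fin 2) ℝ :=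
  vdpX1 μ * pderiv 0 p + vdpX2 * pderiv 1 p

/-!
Write `a = a1 / a2` in lowest terms. If a prime `q ∣ a2` did not divide `X1`, then, since
`a2 ∣ X1³ a1 𝒳a2`, comparing `q`-adic valuations would give `q ∣ 𝒳q`, an invariant algebraic
curve; so `a2` is a unit times `X1 ^ k`. Restricting the equation to the curve `X1 = 0`, on which
`𝒳X1 = -x1`, rules out every `k`: for `k ≤ 1` the term `6x1` survives, for `k ≥ 3` it forces
`X1 ∣ a1`, and for `k = 2` it gives `2a1 + 3 ≡ 0 mod X1`, after which a second restriction,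
evaluated at `x1 = 0`, leaves `6μ = 0`.
-/

section Derivation

variable {A R : Type*} [CommRing A] [CommRing R] [IsDomain R] [Algebra A R] [Algebra ℚ R]

theorem Prime.dvd_derivation_of_pow_dvd (D : Derivation A R R) {q : R} (hq : Prime q) {n : ℕ}
    (h : q ^ (n + 1) ∣ D (q ^ (n + 1))) : q ∣ D q := by
  have hunit : IsUnit ((n : R) + 1) := by
    exact_mod_cast (isUnit_iff_ne_zero.mpr (by positivity : (n : ℚ) + 1 ≠ 0)).map (algebraMap ℚ R)
  rw [Derivation.leibniz_pow, Nat.add_sub_cancel, pow_succ, nsmul_eq_mul, smul_eq_mul,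
    Nat.cast_succ, mul_left_comm, mul_dvd_mul_iff_left (pow_ne_zero n hq.ne_zero)] at h
  exact (hq.dvd_mul.mp h).resolve_left fun h' => hq.not_isUnit (isUnit_of_dvd_unit h' hunit)

variable [WfDvdMonoid R]

theorem Prime.dvd_derivation_of_dvd_mul_derivation (D : Derivation A R R) {b f q : R}
    (hb : b ≠ 0) (hbf : b ∣ f * D b) (hq : Prime q) (hqb : q ∣ b) (hqf : ¬ q ∣ f) :
    q ∣ D q := by
  obtain ⟨n, e, hqe, rfl⟩ := WfDvdMonoid.max_power_factor hb hq.irreducible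
  obtain ⟨m, rfl⟩ : ∃ m, n = m + 1 :=
    Nat.exists_eq_succ_of_ne_zero fun hn => hqe (by simpa [hn] using hqb)
  have hDb : q ^ (m + 1) ∣ e * D (q ^ (m + 1)) := by
    have := hq.pow_dvd_of_dvd_mul_left _ hqf ((dvd_mul_right _ e).trans hbf)
    rw [Derivation.leibniz, smul_eq_mul, smul_eq_mul] at this
    exact (dvd_add_right (dvd_mul_right _ _)).mp this
  exact hq.dvd_derivation_of_pow_dvd D (hq.pow_dvd_of_dvd_mul_left _ hqe hDb)

end Derivation

theorem UniqueFactorizationMonoid.exists_associated_pow_of_forall_prime_dvd {R : Type*}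
    [CommMonoidWithZero R] [UniqueFactorizationMonoid R] {b p : R} (hb : b ≠ 0) (hp : Prime p)
    (h : ∀ q, Prime q → q ∣ b → q ∣ p) : ∃ n, Associated (p ^ n) b := by
  obtain ⟨n, e, hpe, rfl⟩ := WfDvdMonoid.max_power_factor hb hp.irreducible
  have he : IsUnit e := by
    by_contra he
    obtain ⟨q, hq, hqe⟩ := WfDvdMonoid.exists_irreducible_factor he (right_ne_zero_of_mul hb)
    have hqp := h q hq.prime (dvd_mul_of_dvd_right hqe _)
    exact hpe ((hq.associated_of_dvd hp.irreducible hqp).symm.dvd.trans hqe)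
  exact ⟨n, he.unit, rfl⟩

theorem MvPolynomial.totalDegree_pos_of_prime {σ K : Type*} [Field K] {p : MvPolynomial σ K}
    (hp : Prime p) : 0 < p.totalDegree := by
  refine Nat.pos_of_ne_zero fun h => hp.not_isUnit ?_
  rw [isUnit_iff_totalDegree_of_isReduced, isUnit_iff_ne_zero]
  refine ⟨fun h0 => hp.ne_zero ?_, h⟩
  rw [totalDegree_eq_zero_iff_eq_C.mp h, h0, map_zero]

namespace MvPolynomial

variable {R : Type*} [CommRing R]

/-- `R[x₀, x₁] ≃ (R[x₀])[x₁]`. -/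
noncomputable def finTwoEquivPolynomial :
    MvPolynomial (Fin 2) R ≃ₐ[R] Polynomial (MvPolynomial (Fin 1) R) :=
  (renameEquiv R (Equiv.swap 0 1)).trans (finSuccEquiv R 1)

theorem finTwoEquivPolynomial_C (r : R) :
    finTwoEquivPolynomial (C r : MvPolynomial (Fin 2) R) = Polynomial.C (C r) :=
  finTwoEquivPolynomial.commutes r

theorem finTwoEquivPolynomial_X_zero :
    finTwoEquivPolynomial (X 0 : MvPolynomial (Fin 2) R) = Polynomial.C (X 0) := by
  rw [finTwoEquivPolynomial, AlgEquiv.trans_apply, renameEquiv_apply, rename_X,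
    Equiv.swap_apply_left]
  exact finSuccEquiv_X_succ (j := 0)

theorem finTwoEquivPolynomial_X_one :
    finTwoEquivPolynomial (X 1 : MvPolynomial (Fin 2) R) = Polynomial.X := by
  simp [finTwoEquivPolynomial, finSuccEquiv_X_zero]

theorem finTwoEquivPolynomial_rename (g : MvPolynomial (Fin 1) R) :
    finTwoEquivPolynomial (rename Fin.castSucc g) = Polynomial.C g := by
  induction g using MvPolynomial.induction_on with
  | C r => rw [rename_C, finTwoEquivPolynomial_C]
  | add p q hp hq => rw [map_add, map_add, hp, hq, Polynomial.C_add]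
  | mul_X p i hp =>
    rw [map_mul, map_mul, hp, rename_X, Subsingleton.elim i 0, Fin.castSucc_zero,
      finTwoEquivPolynomial_X_zero, Polynomial.C_mul]

variable (g : MvPolynomial (Fin 1) R)

theorem finTwoEquivPolynomial_X_one_sub_rename :
    finTwoEquivPolynomial (X 1 - rename Fin.castSucc g) = Polynomial.X - Polynomial.C g := by
  rw [map_sub, finTwoEquivPolynomial_X_one, finTwoEquivPolynomial_rename]

theorem aeval_eq_eval_finTwoEquivPolynomial (p : MvPolynomial (Fin 2) R) :
    aeval ![X 0, g] p = (finTwoEquivPolynomial p).eval g := by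
  induction p using MvPolynomial.induction_on with
  | C r => rw [aeval_C, finTwoEquivPolynomial_C, Polynomial.eval_C, algebraMap_eq]
  | add p q hp hq => rw [map_add, map_add, hp, hq, Polynomial.eval_add]
  | mul_X p i hp =>
    rw [map_mul, map_mul, hp, Polynomial.eval_mul, aeval_X]
    fin_cases i
    · simp [finTwoEquivPolynomial_X_zero]
    · simp [finTwoEquivPolynomial_X_one]

theorem X_one_sub_rename_dvd_iff {p : MvPolynomial (Fin 2) R} :
    X 1 - rename Fin.castSucc g ∣ p ↔ aeval ![X 0, g] p = 0 := by
  rw [← map_dvd_iff finTwoEquivPolynomial, finTwoEquivPolynomial_X_one_sub_rename,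
    Polynomial.dvd_iff_isRoot, aeval_eq_eval_finTwoEquivPolynomial, Polynomial.IsRoot]

theorem prime_X_one_sub_rename [IsDomain R] : Prime (X 1 - rename Fin.castSucc g) := by
  have := Polynomial.prime_X_sub_C g
  rw [← finTwoEquivPolynomial_X_one_sub_rename] at this
  exact (MulEquiv.prime_iff _).mp this

end MvPolynomial

namespace VanDerPol

variable (μ : ℝ)

noncomputable def derivation : Derivation ℝ (MvPolynomial (Fin 2) ℝ) (MvPolynomial (Fin 2) ℝ) :=
  vdpX1 μ • pderiv 0 + vdpX2 • pderiv 1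

theorem derivation_apply (p : MvPolynomial (Fin 2) ℝ) : derivation μ p = vdpXop μ p := rfl

theorem vdpXop_mul (p q : MvPolynomial (Fin 2) ℝ) :
    vdpXop μ (p * q) = p * vdpXop μ q + q * vdpXop μ p := by
  simp only [← derivation_apply, Derivation.leibniz, smul_eq_mul]

theorem vdpXop_pow_succ (p : MvPolynomial (Fin 2) ℝ) (n : ℕ) :
    vdpXop μ (p ^ (n + 1)) = (n + 1) * p ^ n * vdpXop μ p := by
  simp only [← derivation_apply, Derivation.leibniz_pow, Nat.add_sub_cancel, nsmul_eq_mul,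
    smul_eq_mul, Nat.cast_succ, mul_assoc]

theorem vdpXop_vdpX1 : vdpXop μ (vdpX1 μ) = vdpX1 μ * (C μ * (1 - X 0 ^ 2)) - X 0 := by
  have h3 : (C 3⁻¹ * 3 : MvPolynomial (Fin 2) ℝ) = 1 := by
    rw [← map_ofNat C 3, ← C_mul, inv_mul_cancel₀ three_ne_zero, C_1]
  have h0 : pderiv 0 (vdpX1 μ) = C μ * (1 - X 0 ^ 2) := by
    simp only [vdpX1, map_sub, pderiv_X, Pi.single_eq_of_ne one_ne_zero, Derivation.leibniz,
      Derivation.leibniz_pow, Nat.add_one_sub_one, Pi.single_eq_same, smul_eq_mul, mul_one,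
      nsmul_eq_mul, Nat.cast_ofNat, derivation_C, mul_zero, add_zero, zero_sub]
    linear_combination (-(C μ * X 0 ^ 2)) * h3
  have h1 : pderiv 1 (vdpX1 μ) = 1 := by simp [vdpX1]
  rw [vdpXop, h0, h1, vdpX2]
  ring

/-- The curve `X1 = 0` is the graph `x2 = g(x1)` of this polynomial. -/
noncomputable def graph : MvPolynomial (Fin 1) ℝ := C μ * (C 3⁻¹ * X 0 ^ 3 - X 0)

theorem vdpX1_eq : vdpX1 μ = X 1 - rename Fin.castSucc (graph μ) := by
  simp [vdpX1, graph]

noncomputable def restrict : MvPolynomial (Fin 2) ℝ →ₐ[ℝ] MvPolynomial (Fin 1) ℝ :=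
  aeval ![X 0, graph μ]

variable {μ}

theorem vdpX1_dvd_iff {p : MvPolynomial (Fin 2) ℝ} : vdpX1 μ ∣ p ↔ restrict μ p = 0 := by
  rw [vdpX1_eq, X_one_sub_rename_dvd_iff, restrict]

variable (μ)

theorem prime_vdpX1 : Prime (vdpX1 μ) := by
  rw [vdpX1_eq]
  exact prime_X_one_sub_rename _

theorem restrict_X_zero : restrict μ (X 0) = X 0 := by simp [restrict]

theorem restrict_vdpX1 : restrict μ (vdpX1 μ) = 0 := vdpX1_dvd_iff.mp dvd_rfl

theorem restrict_vdpXop_vdpX1 : restrict μ (vdpXop μ (vdpX1 μ)) = - X 0 := by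
  simp [vdpXop_vdpX1, restrict_vdpX1, restrict_X_zero]

theorem not_vdpX1_dvd_six_mul_X_zero : ¬ vdpX1 μ ∣ 6 * X 0 := by
  rw [vdpX1_dvd_iff, map_mul, map_ofNat, restrict_X_zero]
  exact mul_ne_zero (by norm_num) (X_ne_zero 0)

/-- The equation `X1³·𝒳a + 2x1·X1²·a + 6x1 = 0` for `a = a1 / a2`, multiplied by `a2²`. -/
noncomputable def cleared (a1 a2 : MvPolynomial (Fin 2) ℝ) : MvPolynomial (Fin 2) ℝ :=
  vdpX1 μ ^ 3 * (a2 * vdpXop μ a1 - a1 * vdpXop μ a2)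
    + 2 * X 0 * vdpX1 μ ^ 2 * a1 * a2 + 6 * X 0 * a2 ^ 2

theorem cleared_mul (w a1 a2 : MvPolynomial (Fin 2) ℝ) :
    cleared μ (w * a1) (w * a2) = w ^ 2 * cleared μ a1 a2 := by
  simp only [cleared, vdpXop_mul]
  ring

/-- `X1^(k+1)·𝒳(a / X1^k) + 2x1·a`. -/
noncomputable def twist (k : ℕ) (a : MvPolynomial (Fin 2) ℝ) : MvPolynomial (Fin 2) ℝ :=
  vdpX1 μ * vdpXop μ a - (k : MvPolynomial (Fin 2) ℝ) * a * vdpXop μ (vdpX1 μ) + 2 * X 0 * a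

theorem cleared_vdpX1_pow (k : ℕ) (a : MvPolynomial (Fin 2) ℝ) :
    cleared μ a (vdpX1 μ ^ k) =
      vdpX1 μ ^ k * (vdpX1 μ ^ 2 * twist μ k a + 6 * X 0 * vdpX1 μ ^ k) := by
  rcases k with _ | k
  · simp only [cleared, twist, pow_zero, ← derivation_apply, Derivation.map_one_eq_zero,
      Nat.cast_zero]
    ring
  · simp only [cleared, twist, vdpXop_pow_succ]
    push_cast
    ring

theorem restrict_twist (k : ℕ) (a : MvPolynomial (Fin 2) ℝ) :
    restrict μ (twist μ k a) = ((k : MvPolynomial (Fin 1) ℝ) + 2) * X 0 * restrict μ a := by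
  simp only [twist, map_add, map_sub, map_mul, map_natCast, map_ofNat, restrict_vdpX1,
    restrict_vdpXop_vdpX1, restrict_X_zero]
  ring

variable {μ}

theorem twist_two_add_ne_zero (hμ : μ ≠ 0) (a : MvPolynomial (Fin 2) ℝ) :
    twist μ 2 a + 6 * X 0 ≠ 0 := by
  intro h
  obtain ⟨b, hb⟩ : vdpX1 μ ∣ 2 * a + 3 := by
    have h' := congrArg (restrict μ) h
    rw [map_add, map_mul, map_ofNat, restrict_twist, restrict_X_zero, map_zero] at h'
    rw [vdpX1_dvd_iff, map_add, map_mul, map_ofNat, map_ofNat]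
    have : (2 * X 0) * (2 * restrict μ a + 3) = 0 := by linear_combination h'
    exact (mul_eq_zero.mp this).resolve_left (mul_ne_zero two_ne_zero (X_ne_zero 0))
  have hDb : 2 * vdpXop μ a = vdpX1 μ * vdpXop μ b + b * vdpXop μ (vdpX1 μ) := by
    have hD := congrArg (derivation μ) hb
    simp only [map_add, Derivation.leibniz, smul_eq_mul, derivation_apply] at hD
    have h2 : vdpXop μ 2 = 0 := by exact_mod_cast (derivation μ).map_natCast 2
    have h3 : vdpXop μ 3 = 0 := by exact_mod_cast (derivation μ).map_natCast 3
    linear_combination hD - a * h2 - h3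
  have hT : vdpX1 μ * (twist μ 1 b + 6 * C μ * (1 - X 0 ^ 2)) = 0 := by
    unfold twist at h ⊢
    linear_combination 2 * h - vdpX1 μ * hDb + (2 * vdpXop μ (vdpX1 μ) - 2 * X 0) * hb
      - 6 * vdpXop_vdpX1 μ
  have h0 := congrArg (fun p => eval 0 (restrict μ p))
    ((mul_eq_zero.mp hT).resolve_left (prime_vdpX1 μ).ne_zero)
  exact hμ (by simpa [restrict_twist, restrict_X_zero, map_ofNat] using h0)

theorem vdpX1_dvd_of_twist_add_eq_zero {k : ℕ} {a : MvPolynomial (Fin 2) ℝ}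
    (h : twist μ (k + 3) a + 6 * X 0 * vdpX1 μ ^ (k + 1) = 0) : vdpX1 μ ∣ a := by
  rw [vdpX1_dvd_iff]
  have h' := congrArg (restrict μ) h
  simp only [map_add, map_mul, map_pow, map_ofNat, map_zero, restrict_twist, restrict_vdpX1,
    restrict_X_zero, zero_pow (Nat.succ_ne_zero k), mul_zero, add_zero] at h'
  have hk : ((k + 3 : ℕ) : MvPolynomial (Fin 1) ℝ) + 2 ≠ 0 := by
    exact_mod_cast (by omega : k + 3 + 2 ≠ 0)
  exact (mul_eq_zero.mp h').resolve_left (mul_ne_zero hk (X_ne_zero 0))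

theorem cleared_vdpX1_pow_ne_zero (hμ : μ ≠ 0) (k : ℕ) {a : MvPolynomial (Fin 2) ℝ}
    (ha : 0 < k → ¬ vdpX1 μ ∣ a) : cleared μ a (vdpX1 μ ^ k) ≠ 0 := by
  rw [cleared_vdpX1_pow]
  refine mul_ne_zero (pow_ne_zero _ (prime_vdpX1 μ).ne_zero) fun h => ?_
  have hX1 := (prime_vdpX1 μ).ne_zero
  rcases k with _ | _ | _ | k
  · refine not_vdpX1_dvd_six_mul_X_zero μ ⟨-(vdpX1 μ * twist μ 0 a), ?_⟩
    linear_combination h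
  · have h' : vdpX1 μ * (vdpX1 μ * twist μ 1 a + 6 * X 0) = 0 := by linear_combination h
    refine not_vdpX1_dvd_six_mul_X_zero μ ⟨-twist μ 1 a, ?_⟩
    linear_combination (mul_eq_zero.mp h').resolve_left hX1
  · have h' : vdpX1 μ ^ 2 * (twist μ 2 a + 6 * X 0) = 0 := by linear_combination h
    exact twist_two_add_ne_zero hμ a ((mul_eq_zero.mp h').resolve_left (pow_ne_zero 2 hX1))
  · have h' : vdpX1 μ ^ 2 * (twist μ (k + 3) a + 6 * X 0 * vdpX1 μ ^ (k + 1)) = 0 := by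
      linear_combination h
    exact ha (by omega)
      (vdpX1_dvd_of_twist_add_eq_zero ((mul_eq_zero.mp h').resolve_left (pow_ne_zero 2 hX1)))

theorem cleared_mul_eq_zero_iff {w a1 a2 : MvPolynomial (Fin 2) ℝ} (hw : w ≠ 0) :
    cleared μ (w * a1) (w * a2) = 0 ↔ cleared μ a1 a2 = 0 := by
  rw [cleared_mul, mul_eq_zero, or_iff_right (pow_ne_zero 2 hw)]

theorem prime_dvd_vdpX1_of_cleared_eq_zero
    (hinv : ¬ ∃ p : MvPolynomial (Fin 2) ℝ, 0 < p.totalDegree ∧ p ∣ vdpXop μ p)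
    {a1 a2 q : MvPolynomial (Fin 2) ℝ} (ha2 : a2 ≠ 0) (hcop : IsRelPrime a1 a2)
    (h : cleared μ a1 a2 = 0) (hq : Prime q) (hqa : q ∣ a2) : q ∣ vdpX1 μ := by
  by_contra hqX1
  have hdvd : a2 ∣ (vdpX1 μ ^ 3 * a1) * derivation μ a2 := by
    refine ⟨vdpX1 μ ^ 3 * vdpXop μ a1 + 2 * X 0 * vdpX1 μ ^ 2 * a1 + 6 * X 0 * a2, ?_⟩
    rw [cleared] at h
    rw [derivation_apply]
    linear_combination -h
  have hqf : ¬ q ∣ vdpX1 μ ^ 3 * a1 := fun hq' =>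
    (hq.dvd_mul.mp hq').elim (fun h => hqX1 (hq.dvd_of_dvd_pow h))
      fun h => hq.not_isUnit (hcop h hqa)
  exact hinv ⟨q, totalDegree_pos_of_prime hq,
    hq.dvd_derivation_of_dvd_mul_derivation (derivation μ) ha2 hdvd hqa hqf⟩

end VanDerPol

open VanDerPol

/-- Assuming the Cheng–Odani theorem (no algebraic invariant curve for van der Pol),
there is no rational function a = a1/a2 satisfying X1³·𝒳a + 2x1·X1²·a + 6x1 = 0;
equivalently (clearing denominators) no polynomials a1, a2 with a2 ≠ 0 satisfy
X1³·(a2·𝒳a1 − a1·𝒳a2) + 2x1·X1²·a1·a2 + 6x1·a2² = 0. -/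
theorem vdp_no_rational_solution (μ : ℝ) (hμ : μ ≠ 0)
    (hinv : ¬ ∃ p : MvPolynomial (Fin 2) ℝ, 0 < p.totalDegree ∧ p ∣ vdpXop μ p) :
    ¬ ∃ a1 a2 : MvPolynomial (Fin 2) ℝ, a2 ≠ 0 ∧
      vdpX1 μ ^ 3 * (a2 * vdpXop μ a1 - a1 * vdpXop μ a2)
        + 2 * X 0 * vdpX1 μ ^ 2 * a1 * a2 + 6 * X 0 * a2 ^ 2 = 0 := by
  rintro ⟨a1, a2, ha2, h⟩
  obtain ⟨b2, b1, d, hcop, rfl, rfl⟩ :=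
    UniqueFactorizationMonoid.exists_reduced_factors a2 ha2 a1
  have hb2 : b2 ≠ 0 := right_ne_zero_of_mul ha2
  have hb : cleared μ b1 b2 = 0 := (cleared_mul_eq_zero_iff (left_ne_zero_of_mul ha2)).mp h
  obtain ⟨k, u, hu⟩ := UniqueFactorizationMonoid.exists_associated_pow_of_forall_prime_dvd hb2
    (prime_vdpX1 μ) fun q hq hqb =>
      prime_dvd_vdpX1_of_cleared_eq_zero hinv hb2 hcop.symm hb hq hqb
  have hb1 : 0 < k → ¬ vdpX1 μ ∣ ↑u⁻¹ * b1 := fun hk hX1 =>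
    (prime_vdpX1 μ).not_isUnit (hcop (hu ▸ dvd_mul_of_dvd_left (dvd_pow_self _ hk.ne') _)
      (Units.dvd_mul_left.mp hX1))
  refine cleared_vdpX1_pow_ne_zero hμ k hb1 ((cleared_mul_eq_zero_iff u.ne_zero).mp ?_)
  rwa [Units.mul_inv_cancel_left, ← mul_comm (vdpX1 μ ^ k), hu]
end
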